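/- Let ab and cd be a pair of non-adjacent edges of V_8 such that the graph obtained from V_8 by bridging ab and cd is isomorphic to V_{10}. Then some 4-cycle of V_8 contains both ab and cd; that is, V_{10} can only be obtained from V_8 by bridging a pair of edges with cycle spread exactly (1,1). -/

import Mathlib

open SimpleGraph

/-- A graph is cubic if every vertex has exactly 3 neighbors. -/
def CubicGraph {V : Type*} (G : SimpleGraph V) : Prop :=
  ∀ v : V, (G.neighborSet v).ncard = 3

/-- `G` is `k`-connected: more than `k` vertices, and deleting any set of
fewer than `k` vertices leaves a connected graph. -/
def KConn {V : Type*} [Fintype V] (k : ℕ) (G : SimpleGraph V) : Prop :=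
  k < Fintype.card V ∧
  ∀ S : Finset V, S.card < k → (G.induce ((↑S : Set V)ᶜ)).Connected

/-- There is a cycle through `v` in `G`. -/
def HasCycleAt {V : Type*} (G : SimpleGraph V) (v : V) : Prop :=
  ∃ c : G.Walk v v, c.IsCycle

/-- A set `X` of edges is cycle-separating: after deleting `X`, at least two
distinct connected components contain cycles. -/
def CycleSeparating {V : Type*} (G : SimpleGraph V) (X : Set (Sym2 V)) : Prop :=
  ∃ u v : V, HasCycleAt (G.deleteEdges X) u ∧ HasCycleAt (G.deleteEdges X) v ∧
    (G.deleteEdges X).connectedComponentMk u ≠ (G.deleteEdges X).connectedComponentMk v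

/-- A cubic graph is cyclically `k`-connected if it is 3-connected, has at least
`2k` vertices, and has no cycle-separating edge-cut of size less than `k`. -/
def CyclicallyKConn {V : Type*} [Fintype V] (k : ℕ) (G : SimpleGraph V) : Prop :=
  KConn 3 G ∧ 2 * k ≤ Fintype.card V ∧
  ∀ X : Finset (Sym2 V), ↑X ⊆ G.edgeSet → X.card < k → ¬ CycleSeparating G ↑X

/-- Edges `ab` and `cd` are non-adjacent edges of `G` (they share no endpoint). -/
def NonadjPair {V : Type*} (G : SimpleGraph V) (a b c d : V) : Prop :=
  G.Adj a b ∧ G.Adj c d ∧ a ≠ c ∧ a ≠ d ∧ b ≠ c ∧ b ≠ d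

/-- The graph obtained from `H` by bridging edges `ab` and `cd`: subdivide `ab`
with a new vertex `x = Sum.inr 0`, subdivide `cd` with a new vertex `y = Sum.inr 1`,
and join `x` to `y`. -/
def Bridge {V : Type*} (H : SimpleGraph V) (a b c d : V) : SimpleGraph (V ⊕ Fin 2) :=
  SimpleGraph.fromEdgeSet
    ((Sym2.map Sum.inl '' (H.edgeSet \ {s(a, b), s(c, d)})) ∪
      {s(Sum.inr 0, Sum.inl a), s(Sum.inr 0, Sum.inl b),
       s(Sum.inr 1, Sum.inl c), s(Sum.inr 1, Sum.inl d),
       s(Sum.inr 0, Sum.inr 1)})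

/-- Both edges `e` and `f` lie on a common 4-cycle of `G`. -/
def InCommonCycle4 {V : Type*} (G : SimpleGraph V) (e f : Sym2 V) : Prop :=
  ∃ (v : V) (c : G.Walk v v), c.IsCycle ∧ c.length = 4 ∧ e ∈ c.edges ∧ f ∈ c.edges

/-- The ladder `Q_{2k}`: the Cartesian product of the cycle `C_k` with `K_2`. -/
def LadderQ (k : ℕ) : SimpleGraph (Fin k × Fin 2) :=
  SimpleGraph.cycleGraph k □ completeGraph (Fin 2)

/-- The Möbius ladder `V_{2k}`: the circulant graph on `ZMod (2k)` with
connection set `{1, -1, k}`. -/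
def MobiusV (k : ℕ) : SimpleGraph (ZMod (2 * k)) :=
  SimpleGraph.circulantGraph {1, -1, (k : ZMod (2 * k))}

/-- The Petersen graph: vertices are the 2-element subsets of a 5-element set,
adjacent iff disjoint (the Kneser graph K(5,2)). -/
def Petersen : SimpleGraph {s : Finset (Fin 5) // s.card = 2} where
  Adj s t := Disjoint (s : Finset (Fin 5)) (t : Finset (Fin 5))
  symm := ⟨fun s t h => h.symm⟩
  loopless := ⟨fun s h => by
    have h2 := s.2
    simp only [disjoint_self, Finset.bot_eq_empty] at h
    rw [h] at h2
    simp at h2⟩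

/-!
Every vertex of `V₁₀` has exactly four vertices at distance two. In the bridged graph the new
vertex `x` subdividing `ab` has neighbours `a`, `b`, `y`, so six walks of length two leave it,
ending at the two other neighbours of `a`, the two other neighbours of `b`, and at `c`, `d`.
For only four of these endpoints to be distinct, two coincidences are needed; as `V₈` is
triangle-free they can only come from two of the edges `ca`, `cb`, `da`, `db`, and
triangle-freeness again forces these to be `bc, da` or `bd, ca`, which closes a 4-cycle through
`ab` and `cd`. The case analysis over `V₈` is a finite check.
-/

open Finset

instance (k : ℕ) : DecidableRel (MobiusV k).Adj := by
  unfold MobiusV; infer_instance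

theorem Sym2.map_inl_eq_mk_inl_iff {α β : Type*} (x : Sym2 α) (p q : α) :
    Sym2.map (Sum.inl : α → α ⊕ β) x = s(.inl p, .inl q) ↔ x = s(p, q) := by
  rw [← Sym2.map_mk, (Sym2.map.injective Sum.inl_injective).eq_iff]

theorem Sym2.map_inl_ne_of_inr_mem {α β : Type*} {x : Sym2 α} {z : Sym2 (α ⊕ β)} {i : β}
    (hi : .inr i ∈ z) : Sym2.map Sum.inl x ≠ z := by
  rintro rfl
  obtain ⟨_, _, h⟩ := Sym2.mem_map.mp hi
  exact Sum.inl_ne_inr h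

section Bridge

variable {V : Type*} (H : SimpleGraph V) (a b c d : V)

def bridgeAdj : V ⊕ Fin 2 → V ⊕ Fin 2 → Prop
  | .inl p, .inl q => H.Adj p q ∧ s(p, q) ≠ s(a, b) ∧ s(p, q) ≠ s(c, d)
  | .inl p, .inr i => (p = a ∨ p = b) ∧ i = 0 ∨ (p = c ∨ p = d) ∧ i = 1
  | .inr i, .inl q => i = 0 ∧ (q = a ∨ q = b) ∨ i = 1 ∧ (q = c ∨ q = d)
  | .inr i, .inr j => i ≠ j

instance [DecidableEq V] [DecidableRel H.Adj] : DecidableRel (bridgeAdj H a b c d) :=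
  fun u v => by cases u <;> cases v <;> unfold bridgeAdj <;> infer_instance

theorem bridge_adj_iff (u v : V ⊕ Fin 2) :
    (Bridge H a b c d).Adj u v ↔ bridgeAdj H a b c d u v := by
  rcases u with p | i <;> rcases v with q | j
  · simpa [Bridge, bridgeAdj, Sym2.map_inl_eq_mk_inl_iff] using fun h _ _ _ _ => h.ne
  · simp [Bridge, bridgeAdj, Sym2.map_inl_ne_of_inr_mem, or_and_right, or_assoc]
  · simp [Bridge, bridgeAdj, Sym2.map_inl_ne_of_inr_mem, and_or_left, or_assoc]
  · fin_cases i <;> fin_cases j <;> simp [Bridge, bridgeAdj]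

instance [DecidableEq V] [DecidableRel H.Adj] : DecidableRel (Bridge H a b c d).Adj := fun u v =>
  decidable_of_iff _ (bridge_adj_iff H a b c d u v).symm

end Bridge

namespace SimpleGraph

variable {V W : Type*} [Fintype V] [DecidableEq V] [Fintype W] [DecidableEq W]

def distTwoCount (G : SimpleGraph V) [DecidableRel G.Adj] (v : V) : ℕ :=
  #{w | w ≠ v ∧ ¬ G.Adj v w ∧ ∃ u, G.Adj v u ∧ G.Adj u w}

theorem Iso.distTwoCount_eq {G : SimpleGraph V} {G' : SimpleGraph W} [DecidableRel G.Adj]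
    [DecidableRel G'.Adj] (e : G ≃g G') (v : V) : distTwoCount G' (e v) = distTwoCount G v :=
  (card_equiv e.toEquiv fun w => by simp [e.surjective.exists, e.map_adj_iff]).symm

end SimpleGraph

theorem distTwoCount_mobiusV_five (v : ZMod (2 * 5)) : (MobiusV 5).distTwoCount v = 4 := by
  revert v; decide

theorem mobiusV_four_adj_of_distTwoCount_bridge (a b c d : ZMod (2 * 4))
    (hpair : NonadjPair (MobiusV 4) a b c d)
    (hx : (Bridge (MobiusV 4) a b c d).distTwoCount (.inr 0) = 4) :
    (MobiusV 4).Adj b c ∧ (MobiusV 4).Adj d a ∨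
      (MobiusV 4).Adj b d ∧ (MobiusV 4).Adj c a := by
  revert a b c d
  unfold NonadjPair
  decide

theorem inCommonCycle4_of_adj {V : Type*} {G : SimpleGraph V} {p q r s : V}
    (hpq : G.Adj p q) (hqr : G.Adj q r) (hrs : G.Adj r s) (hsp : G.Adj s p)
    (hpr : p ≠ r) (hqs : q ≠ s) : InCommonCycle4 G s(p, q) s(r, s) := by
  refine ⟨p, .cons hpq (.cons hqr (.cons hrs (.cons hsp .nil))), ?_, rfl, by simp, by simp⟩
  have := hpq.ne; have := hqr.ne; have := hrs.ne; have := hsp.ne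
  simp_all [Walk.isCycle_def, Walk.isTrail_def, ne_comm]

theorem stmt18 (a b c d : ZMod (2 * 4))
    (hpair : NonadjPair (MobiusV 4) a b c d)
    (hiso : Nonempty (Bridge (MobiusV 4) a b c d ≃g MobiusV 5)) :
    InCommonCycle4 (MobiusV 4) s(a, b) s(c, d) := by
  obtain ⟨e⟩ := hiso
  have hx : (Bridge (MobiusV 4) a b c d).distTwoCount (.inr 0) = 4 := by
    rw [← Iso.distTwoCount_eq e]
    exact distTwoCount_mobiusV_five _
  have hcycle := mobiusV_four_adj_of_distTwoCount_bridge a b c d hpair hx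
  obtain ⟨hab, hcd, hac, had, hbc, hbd⟩ := hpair
  rcases hcycle with ⟨hbc', hda⟩ | ⟨hbd', hca⟩
  · exact inCommonCycle4_of_adj hab hbc' hcd hda hac hbd
  · rw [Sym2.eq_swap (a := c)]
    exact inCommonCycle4_of_adj hab hbd' hcd.symm hca had hbc
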